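/- For every triple (α, β, γ) ∈ Ω there exists a Vershik–Kerov sequence (λ(n))_{n∈ℕ} whose VK parameters are exactly (α, β, γ). -/

import Mathlib

open Filter Topology

/-- The order `x ≪ y` : `|x| < |y|`, or `|x| = |y|` and `x ≤ y`. -/
def VKle (x y : ℝ) : Prop := |x| < |y| ∨ (|x| = |y| ∧ x ≤ y)

/-!
Fix a scale `c n` with `√n ≪ c n ≪ n`, e.g. `c n = n ^ (3/4)`. The `n`-th vector lists `n α_i`
for the indices with `n |α_i| > c n` (only `O(n² / c²) = o(n)` of them, as `∑ α_i² < ∞`), then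
`m ≈ γ n² / (2 c²) = o(n)` pairs `c, -c`, which add `γ n²` to `p₂` and nothing to `p₁`, and fills
the remaining `~ n` places with one value `d` making `p₁ = n β`. By Cauchy–Schwarz `d = O(1 + n / c)`,
which is `o(c)`; so the vector is `≪`-decreasing, and the `d`'s add only `O(n d²) = o(n²)` to `p₂`.
Every entry past the first block is `O(c) = o(n)`, whence `λ_i / n → α_i`.
-/

open Finset

namespace VKle

lemma refl (x : ℝ) : VKle x x := Or.inr ⟨rfl, le_rfl⟩

lemma of_abs_lt {x y : ℝ} (h : |x| < |y|) : VKle x y := Or.inl h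

lemma neg_self {c : ℝ} (hc : 0 ≤ c) : VKle (-c) c := Or.inr ⟨abs_neg c, by linarith⟩

lemma abs_le {x y : ℝ} (h : VKle x y) : |x| ≤ |y| := h.elim le_of_lt fun h => h.1.le

lemma mul_left {x y t : ℝ} (ht : 0 < t) (h : VKle x y) : VKle (t * x) (t * y) := by
  rcases h with h | ⟨h, h'⟩
  · exact of_abs_lt (by simpa only [abs_mul] using mul_lt_mul_of_pos_left h (abs_pos.2 ht.ne'))
  · exact Or.inr ⟨by simp only [abs_mul, h], mul_le_mul_of_nonneg_left h' ht.le⟩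

end VKle

lemma antitone_abs_of_vkle {α : ℕ → ℝ} (hdec : ∀ i, VKle (α (i + 1)) (α i)) :
    Antitone fun i => |α i| :=
  antitone_nat_of_succ_le fun i => (hdec i).abs_le

lemma Summable.tendsto_zero_of_sq {α : ℕ → ℝ} (hsum : Summable fun i => α i ^ 2) :
    Tendsto α atTop (𝓝 0) := by
  have := hsum.tendsto_atTop_zero.sqrt
  simp only [Real.sqrt_sq_eq_abs, Real.sqrt_zero] at this
  exact (tendsto_zero_iff_abs_tendsto_zero _).2 this

namespace VershikKerov

def blocks (a : ℕ → ℝ) (k m : ℕ) (c d : ℝ) (i : ℕ) : ℝ :=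
  if i < k then a i else if i < k + m then c else if i < k + 2 * m then -c else d

section Blocks

variable {a : ℕ → ℝ} {k m : ℕ} {c d : ℝ}

lemma blocks_of_lt {i : ℕ} (hi : i < k) : blocks a k m c d i = a i := if_pos hi

lemma blocks_vkle_succ (ha : ∀ i, i + 1 < k → VKle (a (i + 1)) (a i))
    (hbig : ∀ i < k, c < |a i|) (hd : |d| < c) (i : ℕ) :
    VKle (blocks a k m c d (i + 1)) (blocks a k m c d i) := by
  have hc : 0 < c := (abs_nonneg d).trans_lt hd
  unfold blocks
  split_ifs <;> first
    | omega
    | exact VKle.refl _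
    | exact ha i ‹_›
    | exact VKle.neg_self hc.le
    | exact VKle.of_abs_lt (by simpa only [abs_neg, abs_of_pos hc] using hbig i ‹_›)
    | exact VKle.of_abs_lt (by simpa only [abs_neg, abs_of_pos hc] using hd)
    | exact VKle.of_abs_lt (hd.trans (hbig i ‹_›))

lemma abs_blocks_le (hd : |d| ≤ c) {i : ℕ} (hi : k ≤ i) : |blocks a k m c d i| ≤ c := by
  have hc : 0 ≤ c := (abs_nonneg d).trans hd
  unfold blocks
  split_ifs <;> first | omega | exact hd | simp [abs_of_nonneg hc]


lemma sum_range_comp_blocks (φ : ℝ → ℝ) (p : ℕ) :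
    ∑ i ∈ range (k + 2 * m + p), φ (blocks a k m c d i)
      = ∑ i ∈ range k, φ (a i) + m * (φ c + φ (-c)) + p * φ d := by
  have hconst (s t : ℕ) (v : ℝ) (hv : ∀ i < t, blocks a k m c d (s + i) = v) :
      ∑ i ∈ range t, φ (blocks a k m c d (s + i)) = t * φ v := by
    simp [sum_congr rfl fun i hi => congrArg φ (hv i (mem_range.1 hi))]
  rw [two_mul, ← add_assoc, sum_range_add, sum_range_add, sum_range_add,
    sum_congr rfl fun i hi => congrArg φ (blocks_of_lt (mem_range.1 hi)),
    hconst k m c fun i hi => by simp [blocks, hi],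
    hconst (k + m) m (-c) fun i hi => by unfold blocks; split_ifs <;> first | rfl | omega,
    hconst (k + m + m) p d fun i _ => by unfold blocks; split_ifs <;> first | rfl | omega]
  ring

end Blocks

structure IsVKScale (c : ℕ → ℝ) : Prop where
  eventually_pos : ∀ᶠ n in atTop, 0 < c n
  tendsto_div_self : Tendsto (fun n : ℕ => c n / n) atTop (𝓝 0)
  tendsto_self_div_sq : Tendsto (fun n : ℕ => (n : ℝ) / c n ^ 2) atTop (𝓝 0)

lemma IsVKScale.tendsto_inv {c : ℕ → ℝ} (hc : IsVKScale c) :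
    Tendsto (fun n => (c n)⁻¹) atTop (𝓝 0) := by
  refine (by simpa using hc.tendsto_self_div_sq.mul hc.tendsto_div_self :
    Tendsto (fun n : ℕ => n / c n ^ 2 * (c n / n)) atTop (𝓝 0)).congr' ?_
  filter_upwards [hc.eventually_pos, eventually_ge_atTop 1] with n hcn hn
  have : (n : ℝ) ≠ 0 := by positivity
  field_simp

noncomputable section Construction

variable (α : ℕ → ℝ) (β γ : ℝ) (c : ℕ → ℝ)

def largeCount (n : ℕ) : ℕ := sInf {i | n * |α i| ≤ c n}

def pairCount (n : ℕ) : ℕ := ⌈γ * n ^ 2 / (2 * c n ^ 2)⌉₊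

def fillCount (n : ℕ) : ℕ := n - (largeCount α c n + 2 * pairCount γ c n)

def fillValue (n : ℕ) : ℝ :=
  n * (β - ∑ i ∈ range (largeCount α c n), α i) / fillCount α γ c n

def IsGood (n : ℕ) : Prop :=
  largeCount α c n + 2 * pairCount γ c n < n ∧ |fillValue α β γ c n| < c n

open scoped Classical in
def vkSeq (n i : ℕ) : ℝ :=
  if IsGood α β γ c n ∧ i < n then
    blocks (fun j => n * α j) (largeCount α c n) (pairCount γ c n) (c n) (fillValue α β γ c n) i
  else 0

end Construction

section LargeCount

variable {α : ℕ → ℝ} {c : ℕ → ℝ} {n i : ℕ}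

lemma lt_mul_abs_of_lt_largeCount (hi : i < largeCount α c n) : c n < n * |α i| :=
  not_le.1 (Nat.notMem_of_lt_sInf hi)

lemma mul_abs_le_of_largeCount_le (hdec : ∀ i, VKle (α (i + 1)) (α i))
    (hα : Tendsto α atTop (𝓝 0)) (hc : 0 < c n) (hi : largeCount α c n ≤ i) :
    n * |α i| ≤ c n := by
  have hsmall : ∀ᶠ j in atTop, n * |α j| < c n := by
    have := (hα.abs.const_mul (n : ℝ))
    simp only [abs_zero, mul_zero] at this
    exact this.eventually (gt_mem_nhds hc)
  have hmem := Nat.sInf_mem (s := {i | n * |α i| ≤ c n}) (hsmall.exists.imp fun _ h => h.le)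
  exact (mul_le_mul_of_nonneg_left (antitone_abs_of_vkle hdec hi) n.cast_nonneg).trans hmem

lemma eventually_lt_largeCount (hdec : ∀ i, VKle (α (i + 1)) (α i))
    (hα : Tendsto α atTop (𝓝 0)) (hc : IsVKScale c) (hi : α i ≠ 0) :
    ∀ᶠ n in atTop, i < largeCount α c n := by
  filter_upwards [hc.tendsto_div_self.eventually (gt_mem_nhds (abs_pos.2 hi)),
    hc.eventually_pos, eventually_ge_atTop 1] with n hlt hcn hn
  by_contra! hle
  have hn0 : (0 : ℝ) < n := by exact_mod_cast hn
  have := mul_abs_le_of_largeCount_le hdec hα hcn hle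
  rw [div_lt_iff₀ hn0] at hlt
  linarith

lemma largeCount_mul_sq_le (hc : 0 ≤ c n) :
    largeCount α c n * c n ^ 2 ≤ n ^ 2 * ∑ i ∈ range (largeCount α c n), α i ^ 2 := by
  have := card_nsmul_le_sum (range (largeCount α c n)) (fun i => (n * α i) ^ 2) (c n ^ 2)
    fun i hi => by
      have := lt_mul_abs_of_lt_largeCount (mem_range.1 hi)
      rw [← sq_abs (n * α i), abs_mul, Nat.abs_cast]
      exact pow_le_pow_left₀ hc this.le 2
  simpa [mul_pow, ← mul_sum, nsmul_eq_mul] using this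

end LargeCount

section Asymptotics

variable {α : ℕ → ℝ} {β γ : ℝ} {c : ℕ → ℝ}

lemma tendsto_largeCount_div (hsum : Summable fun i => α i ^ 2) (hc : IsVKScale c) :
    Tendsto (fun n => (largeCount α c n : ℝ) / n) atTop (𝓝 0) := by
  have hbound : Tendsto (fun n : ℕ => (∑' i, α i ^ 2) * (n / c n ^ 2)) atTop (𝓝 0) := by
    simpa using hc.tendsto_self_div_sq.const_mul (∑' i, α i ^ 2)
  refine squeeze_zero' (Eventually.of_forall fun n => by positivity) ?_ hbound
  filter_upwards [hc.eventually_pos, eventually_ge_atTop 1] with n hcn hn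
  have hn0 : (0 : ℝ) < n := by exact_mod_cast hn
  have hT := hsum.sum_le_tsum (range (largeCount α c n)) fun i _ => sq_nonneg (α i)
  have hk := (largeCount_mul_sq_le (α := α) hcn.le).trans
    (mul_le_mul_of_nonneg_left hT (sq_nonneg (n : ℝ)))
  calc (largeCount α c n : ℝ) / n ≤ n ^ 2 * (∑' i, α i ^ 2) / c n ^ 2 / n := by
        gcongr
        rwa [le_div_iff₀ (by positivity)]
    _ = _ := by field_simp

lemma pairCount_lt (hγ : 0 ≤ γ) (n : ℕ) :
    (pairCount γ c n : ℝ) < γ * n ^ 2 / (2 * c n ^ 2) + 1 :=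
  Nat.ceil_lt_add_one (by positivity)

lemma tendsto_pairCount_div (hγ : 0 ≤ γ) (hc : IsVKScale c) :
    Tendsto (fun n => (pairCount γ c n : ℝ) / n) atTop (𝓝 0) := by
  have hbound : Tendsto (fun n : ℕ => γ / 2 * (n / c n ^ 2) + (n : ℝ)⁻¹) atTop (𝓝 0) := by
    simpa using (hc.tendsto_self_div_sq.const_mul (γ / 2)).add tendsto_inv_atTop_nhds_zero_nat
  refine squeeze_zero' (Eventually.of_forall fun n => by positivity) ?_ hbound
  filter_upwards [eventually_ge_atTop 1] with n hn
  have hn0 : (0 : ℝ) < n := by exact_mod_cast hn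
  have := pairCount_lt (c := c) hγ n
  rw [div_le_iff₀ hn0]
  calc (pairCount γ c n : ℝ) ≤ γ * n ^ 2 / (2 * c n ^ 2) + 1 := this.le
    _ = _ := by field_simp

lemma tendsto_pairCount_mul_sq (hγ : 0 ≤ γ) (hc : IsVKScale c) :
    Tendsto (fun n => 2 * pairCount γ c n * c n ^ 2 / (n : ℝ) ^ 2) atTop (𝓝 γ) := by
  have hupper : Tendsto (fun n : ℕ => γ + 2 * (c n / n) ^ 2) atTop (𝓝 γ) := by
    simpa using tendsto_const_nhds.add ((hc.tendsto_div_self.pow 2).const_mul 2)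
  refine tendsto_of_tendsto_of_tendsto_of_le_of_le' tendsto_const_nhds hupper ?_ ?_ <;>
    filter_upwards [hc.eventually_pos, eventually_ge_atTop 1] with n hcn hn <;>
    have hn0 : (0 : ℝ) < n := by exact_mod_cast hn
  · have := Nat.le_ceil (γ * n ^ 2 / (2 * c n ^ 2))
    rw [le_div_iff₀ (by positivity)]
    rw [div_le_iff₀ (by positivity)] at this
    unfold pairCount
    linarith
  · have := pairCount_lt (c := c) hγ n
    rw [div_le_iff₀ (by positivity)]
    calc 2 * (pairCount γ c n : ℝ) * c n ^ 2 ≤ 2 * (γ * n ^ 2 / (2 * c n ^ 2) + 1) * c n ^ 2 := by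
          gcongr
      _ = (γ + 2 * (c n / n) ^ 2) * n ^ 2 := by field_simp

lemma eventually_le_two_mul_fillCount (hsum : Summable fun i => α i ^ 2) (hγ : 0 ≤ γ)
    (hc : IsVKScale c) : ∀ᶠ n : ℕ in atTop, (n : ℝ) ≤ 2 * fillCount α γ c n := by
  have hlim := (tendsto_largeCount_div hsum hc).add ((tendsto_pairCount_div hγ hc).const_mul 2)
  rw [mul_zero, add_zero] at hlim
  filter_upwards [hlim.eventually (gt_mem_nhds (one_half_pos (α := ℝ))),
    eventually_ge_atTop 1] with n hlt hn
  have hn0 : (0 : ℝ) < n := by exact_mod_cast hn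
  have hsmall : ((largeCount α c n + 2 * pairCount γ c n : ℕ) : ℝ) < n / 2 := by
    push_cast
    rw [mul_div_assoc', ← add_div, div_lt_iff₀ hn0] at hlt
    linarith
  have hle : largeCount α c n + 2 * pairCount γ c n ≤ n := by
    have : ((largeCount α c n + 2 * pairCount γ c n : ℕ) : ℝ) ≤ n := by linarith
    exact_mod_cast this
  rw [fillCount, Nat.cast_sub hle]
  linarith

lemma abs_sub_sum_largeCount_le (hsum : Summable fun i => α i ^ 2) {n : ℕ} (hcn : 0 < c n) :
    |β - ∑ i ∈ range (largeCount α c n), α i| ≤ |β| + (∑' i, α i ^ 2) * n / c n := by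
  set k := largeCount α c n
  set A := ∑' i, α i ^ 2
  have hT : ∑ i ∈ range k, α i ^ 2 ≤ A := hsum.sum_le_tsum _ fun i _ => sq_nonneg (α i)
  have hT0 : 0 ≤ ∑ i ∈ range k, α i ^ 2 := sum_nonneg fun i _ => sq_nonneg (α i)
  have hCS : (∑ i ∈ range k, α i) ^ 2 ≤ k * ∑ i ∈ range k, α i ^ 2 := by
    simpa using sq_sum_le_card_mul_sum_sq (s := range k) (f := α)
  have hk := largeCount_mul_sq_le (α := α) hcn.le
  have hsq : (|∑ i ∈ range k, α i| * c n) ^ 2 ≤ (A * n) ^ 2 := by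
    calc (|∑ i ∈ range k, α i| * c n) ^ 2 = (∑ i ∈ range k, α i) ^ 2 * c n ^ 2 := by
          rw [mul_pow, sq_abs]
      _ ≤ k * c n ^ 2 * ∑ i ∈ range k, α i ^ 2 := by nlinarith [sq_nonneg (c n)]
      _ ≤ n ^ 2 * (∑ i ∈ range k, α i ^ 2) * ∑ i ∈ range k, α i ^ 2 := by gcongr
      _ = n ^ 2 * (∑ i ∈ range k, α i ^ 2) ^ 2 := by ring
      _ ≤ n ^ 2 * A ^ 2 := by gcongr
      _ = (A * n) ^ 2 := by ring
  have hS : |∑ i ∈ range k, α i| ≤ A * n / c n := by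
    rw [le_div_iff₀ hcn]
    exact (pow_le_pow_iff_left₀ (by positivity) (by positivity) two_ne_zero).1 hsq
  calc |β - ∑ i ∈ range k, α i| ≤ |β| + |∑ i ∈ range k, α i| := abs_sub _ _
    _ ≤ _ := by gcongr

lemma abs_fillValue_le (hsum : Summable fun i => α i ^ 2) {n : ℕ} (hcn : 0 < c n)
    (hn : 1 ≤ n) (hp : (n : ℝ) ≤ 2 * fillCount α γ c n) :
    |fillValue α β γ c n| ≤ 2 * (|β| + (∑' i, α i ^ 2) * n / c n) := by
  have hn0 : (0 : ℝ) < n := by exact_mod_cast hn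
  have hp0 : (0 : ℝ) < fillCount α γ c n := by linarith
  rw [fillValue, abs_div, abs_mul, Nat.abs_cast, Nat.abs_cast, div_le_iff₀ hp0]
  calc (n : ℝ) * |β - ∑ i ∈ range (largeCount α c n), α i|
      ≤ 2 * fillCount α γ c n * (|β| + (∑' i, α i ^ 2) * n / c n) :=
        mul_le_mul hp (abs_sub_sum_largeCount_le hsum hcn) (abs_nonneg _) (by positivity)
    _ = _ := by ring

lemma eventually_isGood (hsum : Summable fun i => α i ^ 2) (hγ : 0 ≤ γ) (hc : IsVKScale c) :
    ∀ᶠ n in atTop, IsGood α β γ c n := by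
  have hlim : Tendsto (fun n : ℕ => 2 * |β| * (c n)⁻¹ + 2 * (∑' i, α i ^ 2) * (n / c n ^ 2))
      atTop (𝓝 0) := by
    simpa using (hc.tendsto_inv.const_mul (2 * |β|)).add
      (hc.tendsto_self_div_sq.const_mul (2 * ∑' i, α i ^ 2))
  filter_upwards [hlim.eventually (gt_mem_nhds one_pos), hc.eventually_pos,
    eventually_le_two_mul_fillCount hsum hγ hc, eventually_ge_atTop 1] with n hlt hcn hp hn
  have hp1 : 1 ≤ fillCount α γ c n := by
    have : (0 : ℝ) < fillCount α γ c n := by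
      linarith [show (1 : ℝ) ≤ n by exact_mod_cast hn]
    exact_mod_cast this
  refine ⟨by unfold fillCount at hp1; omega, (abs_fillValue_le hsum hcn hn hp).trans_lt ?_⟩
  calc 2 * (|β| + (∑' i, α i ^ 2) * n / c n)
      = (2 * |β| * (c n)⁻¹ + 2 * (∑' i, α i ^ 2) * (n / c n ^ 2)) * c n := by
        field_simp
    _ < 1 * c n := by gcongr
    _ = c n := one_mul _

lemma tendsto_sum_sq_largeCount (hdec : ∀ i, VKle (α (i + 1)) (α i))
    (hsum : Summable fun i => α i ^ 2) (hc : IsVKScale c) :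
    Tendsto (fun n => ∑ i ∈ range (largeCount α c n), α i ^ 2) atTop (𝓝 (∑' i, α i ^ 2)) := by
  have htsum (n : ℕ) : ∑ i ∈ range (largeCount α c n), α i ^ 2
      = ∑' i, if i < largeCount α c n then α i ^ 2 else 0 := by
    rw [tsum_eq_sum (s := range (largeCount α c n)) fun i hi => if_neg (by simpa using hi)]
    exact sum_congr rfl fun i hi => (if_pos (mem_range.1 hi)).symm
  simp only [htsum]
  refine tendsto_tsum_of_dominated_convergence hsum (fun i => ?_)
    (Eventually.of_forall fun n i => ?_)
  · by_cases hi : α i = 0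
    · simp [hi]
    · refine tendsto_const_nhds.congr' ?_
      filter_upwards [eventually_lt_largeCount hdec hsum.tendsto_zero_of_sq hc hi] with n hn
      exact (if_pos hn).symm
  · split_ifs <;> simp [sq_nonneg]

lemma tendsto_fillCount_mul_sq_div (hsum : Summable fun i => α i ^ 2) (hγ : 0 ≤ γ)
    (hc : IsVKScale c) :
    Tendsto (fun n => fillCount α γ c n * fillValue α β γ c n ^ 2 / (n : ℝ) ^ 2)
      atTop (𝓝 0) := by
  set A := ∑' i, α i ^ 2
  have hbound : Tendsto (fun n : ℕ => 8 * β ^ 2 * (n : ℝ)⁻¹ + 8 * A ^ 2 * (n / c n ^ 2))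
      atTop (𝓝 0) := by
    simpa using (tendsto_inv_atTop_nhds_zero_nat.const_mul (8 * β ^ 2)).add
      (hc.tendsto_self_div_sq.const_mul (8 * A ^ 2))
  refine squeeze_zero' (Eventually.of_forall fun n => by positivity) ?_ hbound
  filter_upwards [hc.eventually_pos, eventually_le_two_mul_fillCount hsum hγ hc,
    eventually_ge_atTop 1] with n hcn hp hn
  have hn0 : (0 : ℝ) < n := by exact_mod_cast hn
  have hpn : (fillCount α γ c n : ℝ) ≤ n := by exact_mod_cast Nat.sub_le _ _
  have hd := abs_fillValue_le (β := β) hsum hcn hn hp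
  have hd2 : fillValue α β γ c n ^ 2 ≤ 8 * β ^ 2 + 8 * A ^ 2 * (n / c n) ^ 2 := by
    calc fillValue α β γ c n ^ 2 = |fillValue α β γ c n| ^ 2 := (sq_abs _).symm
      _ ≤ (2 * (|β| + A * n / c n)) ^ 2 := by gcongr
      _ ≤ 8 * β ^ 2 + 8 * A ^ 2 * (n / c n) ^ 2 := by
        rw [mul_div_assoc]; nlinarith [sq_nonneg (|β| - A * (n / c n)), sq_abs β]
  calc fillCount α γ c n * fillValue α β γ c n ^ 2 / (n : ℝ) ^ 2
      ≤ n * (8 * β ^ 2 + 8 * A ^ 2 * (n / c n) ^ 2) / (n : ℝ) ^ 2 := by gcongr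
    _ = _ := by field_simp

end Asymptotics

section VKSeq

variable {α : ℕ → ℝ} {β γ : ℝ} {c : ℕ → ℝ} {n : ℕ}

lemma vkSeq_eq_zero_of_le {i : ℕ} (h : n ≤ i) : vkSeq α β γ c n i = 0 :=
  if_neg fun hg => (not_lt.2 h) hg.2

lemma vkSeq_of_isGood {i : ℕ} (hg : IsGood α β γ c n) (hi : i < n) :
    vkSeq α β γ c n i = blocks (fun j => n * α j) (largeCount α c n) (pairCount γ c n) (c n)
      (fillValue α β γ c n) i :=
  if_pos ⟨hg, hi⟩

lemma vkSeq_vkle_succ (hdec : ∀ i, VKle (α (i + 1)) (α i)) {i : ℕ} (hi : i + 1 < n) :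
    VKle (vkSeq α β γ c n (i + 1)) (vkSeq α β γ c n i) := by
  by_cases hg : IsGood α β γ c n
  · have hn : (0 : ℝ) < n := by exact_mod_cast (Nat.zero_lt_succ i).trans hi
    rw [vkSeq_of_isGood hg hi, vkSeq_of_isGood hg (by omega)]
    refine blocks_vkle_succ (fun j _ => (hdec j).mul_left hn) (fun j hj => ?_) hg.2 i
    simpa [abs_mul] using lt_mul_abs_of_lt_largeCount hj
  · simp only [vkSeq, hg, false_and, if_false]
    exact VKle.refl 0

lemma sum_range_comp_vkSeq (hg : IsGood α β γ c n) (φ : ℝ → ℝ) :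
    ∑ i ∈ range n, φ (vkSeq α β γ c n i)
      = ∑ i ∈ range (largeCount α c n), φ (n * α i)
        + pairCount γ c n * (φ (c n) + φ (-c n)) + fillCount α γ c n * φ (fillValue α β γ c n) := by
  have hn : largeCount α c n + 2 * pairCount γ c n + fillCount α γ c n = n := by
    have := hg.1; unfold fillCount; omega
  rw [← sum_range_comp_blocks φ (fillCount α γ c n), hn]
  exact sum_congr rfl fun i hi => congrArg φ (vkSeq_of_isGood hg (mem_range.1 hi))

lemma sum_range_vkSeq (hg : IsGood α β γ c n) : ∑ i ∈ range n, vkSeq α β γ c n i = n * β := by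
  have hp : (fillCount α γ c n : ℝ) ≠ 0 := Nat.cast_ne_zero.2 (Nat.sub_pos_of_lt hg.1).ne'
  have := sum_range_comp_vkSeq hg id
  simp only [id] at this
  rw [this]
  simp only [add_neg_cancel, mul_zero, add_zero, fillValue, ← mul_sum]
  field_simp
  ring

lemma sum_range_sq_vkSeq (hg : IsGood α β γ c n) :
    ∑ i ∈ range n, vkSeq α β γ c n i ^ 2
      = n ^ 2 * ∑ i ∈ range (largeCount α c n), α i ^ 2 + 2 * pairCount γ c n * c n ^ 2
        + fillCount α γ c n * fillValue α β γ c n ^ 2 := by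
  rw [sum_range_comp_vkSeq hg (· ^ 2)]
  simp only [mul_pow, ← mul_sum, neg_sq]
  ring

end VKSeq

section Limits

variable {α : ℕ → ℝ} {β γ : ℝ} {c : ℕ → ℝ}

lemma tendsto_vkSeq_div (hdec : ∀ i, VKle (α (i + 1)) (α i)) (hsum : Summable fun i => α i ^ 2)
    (hγ : 0 ≤ γ) (hc : IsVKScale c) (i : ℕ) :
    Tendsto (fun n => vkSeq α β γ c n i / n) atTop (𝓝 (α i)) := by
  have hbound : Tendsto (fun n : ℕ => 2 * (c n / n)) atTop (𝓝 0) := by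
    simpa using hc.tendsto_div_self.const_mul 2
  rw [tendsto_iff_norm_sub_tendsto_zero]
  refine squeeze_zero' (Eventually.of_forall fun n => norm_nonneg _) ?_ hbound
  filter_upwards [eventually_isGood (β := β) hsum hγ hc, hc.eventually_pos,
    eventually_gt_atTop i] with n hg hcn hin
  have hn : (0 : ℝ) < n := by exact_mod_cast (Nat.zero_le i).trans_lt hin
  have hdiff : |vkSeq α β γ c n i - n * α i| ≤ 2 * c n := by
    rw [vkSeq_of_isGood hg hin]
    rcases lt_or_ge i (largeCount α c n) with hik | hki
    · rw [blocks_of_lt hik, sub_self, abs_zero]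
      positivity
    · calc _ ≤ |blocks (fun j => n * α j) (largeCount α c n) (pairCount γ c n) (c n)
              (fillValue α β γ c n) i| + |n * α i| := abs_sub _ _
        _ ≤ c n + c n := by
          gcongr
          · exact abs_blocks_le hg.2.le hki
          · rw [abs_mul, Nat.abs_cast]
            exact mul_abs_le_of_largeCount_le hdec hsum.tendsto_zero_of_sq hcn hki
        _ = 2 * c n := by ring
  calc ‖vkSeq α β γ c n i / n - α i‖ = |vkSeq α β γ c n i - n * α i| / n := by
        rw [Real.norm_eq_abs, ← abs_of_pos hn, ← abs_div, abs_of_pos hn]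
        field_simp
    _ ≤ 2 * (c n / n) := by rw [← mul_div_assoc]; gcongr

lemma tendsto_sum_vkSeq_div (hsum : Summable fun i => α i ^ 2) (hγ : 0 ≤ γ) (hc : IsVKScale c) :
    Tendsto (fun n => (∑ i ∈ range n, vkSeq α β γ c n i) / n) atTop (𝓝 β) := by
  refine tendsto_const_nhds.congr' ?_
  filter_upwards [eventually_isGood hsum hγ hc, eventually_ge_atTop 1] with n hg hn
  have hn : (n : ℝ) ≠ 0 := by positivity
  rw [sum_range_vkSeq hg, mul_div_cancel_left₀ _ hn]

lemma tendsto_sum_sq_vkSeq_div (hdec : ∀ i, VKle (α (i + 1)) (α i))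
    (hsum : Summable fun i => α i ^ 2) (hγ : 0 ≤ γ) (hc : IsVKScale c) :
    Tendsto (fun n => (∑ i ∈ range n, vkSeq α β γ c n i ^ 2) / (n : ℝ) ^ 2) atTop
      (𝓝 (γ + ∑' i, α i ^ 2)) := by
  have hlim := ((tendsto_sum_sq_largeCount hdec hsum hc).add (tendsto_pairCount_mul_sq hγ hc)).add
    (tendsto_fillCount_mul_sq_div (β := β) hsum hγ hc)
  rw [add_zero, add_comm] at hlim
  refine hlim.congr' ?_
  filter_upwards [eventually_isGood hsum hγ hc, eventually_ge_atTop 1] with n hg hn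
  have hn : (n : ℝ) ≠ 0 := by positivity
  rw [sum_range_sq_vkSeq hg]
  field_simp

end Limits

lemma isVKScale_rpow {p : ℝ} (hp : 1 / 2 < p) (hp' : p < 1) :
    IsVKScale fun n => (n : ℝ) ^ p := by
  have hnat := tendsto_natCast_atTop_atTop (R := ℝ)
  refine ⟨?_, ?_, ?_⟩
  · filter_upwards [eventually_ge_atTop 1] with n hn
    exact Real.rpow_pos_of_pos (by exact_mod_cast hn) p
  · refine ((tendsto_rpow_neg_atTop (sub_pos.2 hp')).comp hnat).congr' ?_
    filter_upwards [eventually_ge_atTop 1] with n hn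
    have hn : (n : ℝ) ≠ 0 := by positivity
    simp [← Real.rpow_sub_one hn]
  · refine ((tendsto_rpow_neg_atTop (by linarith : 0 < 2 * p - 1)).comp hnat).congr' ?_
    filter_upwards [eventually_ge_atTop 1] with n hn
    have hn : (0 : ℝ) < n := by exact_mod_cast hn
    rw [Function.comp_apply, ← Real.rpow_natCast, ← Real.rpow_mul hn.le, neg_sub,
      Real.rpow_sub hn, Real.rpow_one]
    ring_nf

end VershikKerov

/-- Every triple `(α,β,γ) ∈ Ω` arises as the VK parameters of some
Vershik–Kerov sequence. -/
theorem exists_vk_sequence (α : ℕ → ℝ) (β γ : ℝ)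
    (hdec : ∀ i, VKle (α (i + 1)) (α i))
    (hsum : Summable fun i => (α i) ^ 2)
    (hγ : 0 ≤ γ) :
    ∃ Λ : ℕ → ℕ → ℝ,
      (∀ n i, n ≤ i → Λ n i = 0) ∧
      (∀ n i, i + 1 < n → VKle (Λ n (i + 1)) (Λ n i)) ∧
      (∀ i, Tendsto (fun n : ℕ => Λ n i / (n : ℝ)) atTop (𝓝 (α i))) ∧
      Tendsto (fun n : ℕ => (∑ i ∈ Finset.range n, Λ n i) / (n : ℝ)) atTop (𝓝 β) ∧
      Tendsto (fun n : ℕ => (∑ i ∈ Finset.range n, (Λ n i) ^ 2) / (n : ℝ) ^ 2)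
        atTop (𝓝 (γ + ∑' i, (α i) ^ 2)) := by
  open VershikKerov in
  have hc : IsVKScale fun n => (n : ℝ) ^ (3 / 4 : ℝ) := isVKScale_rpow (by norm_num) (by norm_num)
  exact ⟨vkSeq α β γ _, fun n i => vkSeq_eq_zero_of_le, fun n i => vkSeq_vkle_succ hdec,
    tendsto_vkSeq_div hdec hsum hγ hc, tendsto_sum_vkSeq_div hsum hγ hc,
    tendsto_sum_sq_vkSeq_div hdec hsum hγ hc⟩
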